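/- Let H ∈ (0,1/2], p > 1 and C > 0, and for ε ∈ (0,1) let k^ε(t,s) = ∫_0^{min(s,t)} K^ε(t,u) K^ε(s,u) du with K^ε(r,u) = C ε^H (r−u)^{H−1/2}(−log(ε(r−u)))^{−p} for u < r and 0 otherwise. Then for every fixed (t,s) ∈ [0,1]², the normalized covariance is monotone in ε: for all 0 < ε₁ ≤ ε₂ < 1, k^{ε₁}(t,s)/(ε₁^{2H}(−log ε₁)^{−2p}) ≥ k^{ε₂}(t,s)/(ε₂^{2H}(−log ε₂)^{−2p}). -/

import Mathlib

/-!
Writing `-log (ε x) = (-log ε) (1 + log x / log ε)` pulls the normalisation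
`ε ^ H (-log ε) ^ (-p)` out of the kernel. For `0 < x ≤ 1` the remaining factor
`(1 + log x / log ε) ^ (-p)` lies in `(0, 1]` and decreases in `ε`, since `log x / log ε ≥ 0`
increases with `ε`. So the normalised covariance integrand is pointwise antitone in `ε`, and
(by `2ab ≤ a² + b²`) it is dominated by `(t - u) ^ (2H - 1) + (s - u) ^ (2H - 1)`, which is
integrable because `H > 0`.
-/

open Real Filter Set MeasureTheory

/-- The short-time rescaled log-modulated kernel, extended by `0` for `u ≥ r`. -/
noncomputable def Keps (H p C ε r u : ℝ) : ℝ :=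
  if u < r then C * ε ^ H * (r - u) ^ (H - 1 / 2) * (-Real.log (ε * (r - u))) ^ (-p) else 0

noncomputable def kernelProfile (H p ε r u : ℝ) : ℝ :=
  if u < r then (r - u) ^ (H - 1 / 2) * (1 + log (r - u) / log ε) ^ (-p) else 0

lemma log_div_log_nonneg {x ε : ℝ} (hx0 : 0 ≤ x) (hx1 : x ≤ 1) (hε0 : 0 ≤ ε)
    (hε1 : ε ≤ 1) : 0 ≤ log x / log ε :=
  div_nonneg_of_nonpos (log_nonpos hx0 hx1) (log_nonpos hε0 hε1)

lemma neg_log_mul_eq {x ε : ℝ} (hε0 : 0 < ε) (hε1 : ε < 1) (hx0 : 0 < x) :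
    -log (ε * x) = -log ε * (1 + log x / log ε) := by
  have : log ε ≠ 0 := (log_neg hε0 hε1).ne
  rw [log_mul hε0.ne' hx0.ne']
  field_simp

lemma intervalIntegrable_sub_rpow {r : ℝ} (hr : -1 < r) (c a b : ℝ) :
    IntervalIntegrable (fun u => (c - u) ^ r) volume a b := by
  simpa using
    (intervalIntegral.intervalIntegrable_rpow' hr (a := c - a) (b := c - b)).comp_sub_left c

section kernelProfile

variable {H p ε ε₁ ε₂ r u t s b : ℝ}

lemma measurable_kernelProfile (H p ε r : ℝ) : Measurable (kernelProfile H p ε r) :=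
  Measurable.ite measurableSet_Iio (by fun_prop) measurable_const

lemma Keps_eq_mul_kernelProfile (C : ℝ) (hε0 : 0 < ε) (hε1 : ε < 1) (hru : r - u ≤ 1) :
    Keps H p C ε r u = C * (ε ^ H * (-log ε) ^ (-p)) * kernelProfile H p ε r u := by
  unfold Keps kernelProfile
  split_ifs with hu
  · have hx0 : 0 < r - u := sub_pos.mpr hu
    rw [neg_log_mul_eq hε0 hε1 hx0, mul_rpow (neg_nonneg.mpr (log_nonpos hε0.le hε1.le))
      (by linarith [log_div_log_nonneg hx0.le hru hε0.le hε1.le])]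
    ring
  · simp

lemma kernelProfile_nonneg (hε0 : 0 ≤ ε) (hε1 : ε ≤ 1) (hru : r - u ≤ 1) :
    0 ≤ kernelProfile H p ε r u := by
  unfold kernelProfile
  split_ifs with hu
  · have hratio := log_div_log_nonneg (sub_pos.mpr hu).le hru hε0 hε1
    exact mul_nonneg (rpow_nonneg (sub_pos.mpr hu).le _) (rpow_nonneg (by linarith) _)
  · exact le_rfl

lemma kernelProfile_le_kernelProfile_of_le (hp : 0 ≤ p) (hε₁ : 0 < ε₁) (h12 : ε₁ ≤ ε₂)
    (hε₂ : ε₂ < 1) (hru : r - u ≤ 1) : kernelProfile H p ε₂ r u ≤ kernelProfile H p ε₁ r u := by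
  unfold kernelProfile
  split_ifs with hu
  · have hx0 : 0 < r - u := sub_pos.mpr hu
    have hlog : log ε₁ ≤ log ε₂ := log_le_log hε₁ h12
    have hlog₂ : log ε₂ < 0 := log_neg (hε₁.trans_le h12) hε₂
    have hratio : log (r - u) / log ε₁ ≤ log (r - u) / log ε₂ := by
      rw [← neg_div_neg_eq, ← neg_div_neg_eq (log (r - u))]
      exact div_le_div_of_nonneg_left (neg_nonneg.mpr (log_nonpos hx0.le hru))
        (neg_pos.mpr hlog₂) (neg_le_neg hlog)
    have hpos : 0 ≤ log (r - u) / log ε₁ :=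
      log_div_log_nonneg hx0.le hru hε₁.le (by linarith)
    gcongr ?_ * ?_
    exact rpow_le_rpow_of_nonpos (by linarith) (by linarith) (neg_nonpos.mpr hp)
  · exact le_rfl

lemma kernelProfile_sq_le (hp : 0 ≤ p) (hε0 : 0 ≤ ε) (hε1 : ε ≤ 1)
    (hru0 : 0 ≤ r - u) (hru : r - u ≤ 1) :
    kernelProfile H p ε r u ^ 2 ≤ (r - u) ^ (2 * H - 1) := by
  unfold kernelProfile
  split_ifs with hu
  · have hlog : 1 ≤ 1 + log (r - u) / log ε := by
      linarith [log_div_log_nonneg hru0 hru hε0 hε1]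
    have hfac : (1 + log (r - u) / log ε) ^ (-p) ≤ 1 :=
      rpow_le_one_of_one_le_of_nonpos hlog (neg_nonpos.mpr hp)
    calc _ = (r - u) ^ (2 * H - 1) * ((1 + log (r - u) / log ε) ^ (-p)) ^ 2 := by
          rw [mul_pow, ← rpow_mul_natCast hru0]; ring_nf
      _ ≤ (r - u) ^ (2 * H - 1) :=
          mul_le_of_le_one_right (rpow_nonneg hru0 _) (pow_le_one₀ (by positivity) hfac)
  · simpa using rpow_nonneg hru0 _

lemma intervalIntegrable_kernelProfile_mul (hH : 0 < H) (hp : 0 ≤ p)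
    (hε0 : 0 ≤ ε) (hε1 : ε ≤ 1) (ht1 : t ≤ 1) (hs1 : s ≤ 1) (hm : 0 ≤ min s t) :
    IntervalIntegrable (fun u => kernelProfile H p ε t u * kernelProfile H p ε s u)
      volume 0 (min s t) := by
  have hdom : IntervalIntegrable (fun u => (t - u) ^ (2 * H - 1) + (s - u) ^ (2 * H - 1))
      volume 0 (min s t) :=
    (intervalIntegrable_sub_rpow (by linarith) t _ _).add
      (intervalIntegrable_sub_rpow (by linarith) s _ _)
  refine hdom.mono_fun ((measurable_kernelProfile H p ε t).mul
    (measurable_kernelProfile H p ε s)).aestronglyMeasurable ?_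
  rw [uIoc_of_le hm]
  refine (ae_restrict_iff' measurableSet_Ioc).mpr (ae_of_all _ fun u hu => ?_)
  have ht0 : 0 ≤ t - u := by linarith [hu.2, min_le_right s t]
  have hs0 : 0 ≤ s - u := by linarith [hu.2, min_le_left s t]
  have hPt := kernelProfile_nonneg (H := H) (p := p) hε0 hε1 (by linarith [hu.1] : t - u ≤ 1)
  have hPs := kernelProfile_nonneg (H := H) (p := p) hε0 hε1 (by linarith [hu.1] : s - u ≤ 1)
  have hsqt := kernelProfile_sq_le (H := H) hp hε0 hε1 ht0 (by linarith [hu.1])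
  have hsqs := kernelProfile_sq_le (H := H) hp hε0 hε1 hs0 (by linarith [hu.1])
  dsimp only
  rw [norm_of_nonneg (mul_nonneg hPt hPs),
    norm_of_nonneg (add_nonneg (rpow_nonneg ht0 _) (rpow_nonneg hs0 _))]
  nlinarith [two_mul_le_add_sq (kernelProfile H p ε t u) (kernelProfile H p ε s u)]

lemma integral_Keps_mul_div_eq (C : ℝ) (hε0 : 0 < ε) (hε1 : ε < 1)
    (ht1 : t ≤ 1) (hs1 : s ≤ 1) (hb : 0 ≤ b) :
    (∫ u in (0 : ℝ)..b, Keps H p C ε t u * Keps H p C ε s u) /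
        (ε ^ (2 * H) * (-log ε) ^ (-(2 * p)))
      = C ^ 2 * ∫ u in (0 : ℝ)..b, kernelProfile H p ε t u * kernelProfile H p ε s u := by
  have hL : 0 < -log ε := neg_pos.mpr (log_neg hε0 hε1)
  have hN : ε ^ (2 * H) * (-log ε) ^ (-(2 * p)) = (ε ^ H * (-log ε) ^ (-p)) ^ 2 := by
    rw [mul_pow, ← rpow_mul_natCast hε0.le, ← rpow_mul_natCast hL.le]
    ring_nf
  have hNpos : 0 < ε ^ H * (-log ε) ^ (-p) := by positivity
  rw [hN, ← intervalIntegral.integral_div, ← intervalIntegral.integral_const_mul]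
  refine intervalIntegral.integral_congr fun u hu => ?_
  rw [uIcc_of_le hb] at hu
  rw [Keps_eq_mul_kernelProfile C hε0 hε1 (by linarith [hu.1]),
    Keps_eq_mul_kernelProfile C hε0 hε1 (by linarith [hu.1])]
  field_simp

end kernelProfile

theorem stmt_2_general (H p C : ℝ) (hH0 : 0 < H) (hp : 1 < p)
    (t s : ℝ) (ht : t ∈ Set.Icc (0:ℝ) 1) (hs : s ∈ Set.Icc (0:ℝ) 1)
    (ε₁ ε₂ : ℝ) (hε₁ : 0 < ε₁) (hε₁₂ : ε₁ ≤ ε₂) (hε₂ : ε₂ < 1) :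
    (∫ u in (0:ℝ)..(min s t), Keps H p C ε₂ t u * Keps H p C ε₂ s u) /
        (ε₂ ^ (2 * H) * (-Real.log ε₂) ^ (-(2 * p)))
      ≤ (∫ u in (0:ℝ)..(min s t), Keps H p C ε₁ t u * Keps H p C ε₁ s u) /
        (ε₁ ^ (2 * H) * (-Real.log ε₁) ^ (-(2 * p))) := by
  have hε₂0 : 0 < ε₂ := hε₁.trans_le hε₁₂
  have hε₁1 : ε₁ < 1 := hε₁₂.trans_lt hε₂
  have hp0 : 0 ≤ p := by linarith
  have hm : 0 ≤ min s t := le_min hs.1 ht.1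
  rw [integral_Keps_mul_div_eq C hε₂0 hε₂ ht.2 hs.2 hm,
    integral_Keps_mul_div_eq C hε₁ hε₁1 ht.2 hs.2 hm]
  gcongr
  refine intervalIntegral.integral_mono_on hm
    (intervalIntegrable_kernelProfile_mul hH0 hp0 hε₂0.le hε₂.le ht.2 hs.2 hm)
    (intervalIntegrable_kernelProfile_mul hH0 hp0 hε₁.le hε₁1.le ht.2 hs.2 hm) fun u hu => ?_
  have htu : t - u ≤ 1 := by linarith [hu.1, ht.2]
  have hsu : s - u ≤ 1 := by linarith [hu.1, hs.2]
  exact mul_le_mul (kernelProfile_le_kernelProfile_of_le hp0 hε₁ hε₁₂ hε₂ htu)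
    (kernelProfile_le_kernelProfile_of_le hp0 hε₁ hε₁₂ hε₂ hsu)
    (kernelProfile_nonneg hε₂0.le hε₂.le hsu) (kernelProfile_nonneg hε₁.le hε₁1.le htu)

/-- Monotonicity in `ε` of the normalized covariance of the rescaled log-modulated
Volterra kernel: for `0 < ε₁ ≤ ε₂ < 1`,
`k^{ε₁}(t,s)/(ε₁^{2H}(-log ε₁)^{-2p}) ≥ k^{ε₂}(t,s)/(ε₂^{2H}(-log ε₂)^{-2p})`. -/
theorem stmt_2 (H p C : ℝ) (hH0 : 0 < H) (hH : H ≤ 1 / 2) (hp : 1 < p) (hC : 0 < C)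
    (t s : ℝ) (ht : t ∈ Set.Icc (0:ℝ) 1) (hs : s ∈ Set.Icc (0:ℝ) 1)
    (ε₁ ε₂ : ℝ) (hε₁ : 0 < ε₁) (hε₁₂ : ε₁ ≤ ε₂) (hε₂ : ε₂ < 1) :
    (∫ u in (0:ℝ)..(min s t), Keps H p C ε₂ t u * Keps H p C ε₂ s u) /
        (ε₂ ^ (2 * H) * (-Real.log ε₂) ^ (-(2 * p)))
      ≤ (∫ u in (0:ℝ)..(min s t), Keps H p C ε₁ t u * Keps H p C ε₁ s u) /
        (ε₁ ^ (2 * H) * (-Real.log ε₁) ^ (-(2 * p))) :=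
  stmt_2_general H p C hH0 hp t s ht hs ε₁ ε₂ hε₁ hε₁₂ hε₂
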